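/- arXiv:1012.5452 — 6 statements merged into one kernel-verified Lean document; each statement's English description precedes it below -/
import Mathlib

section
/- Let f : ℝ → ℝ be a 1-periodic function which is absolutely continuous on [0,1], i.e. there is a locally square-integrable function g : ℝ → ℝ with f(x) = f(0) + ∫₀ˣ g(y) dy for all x. If ∫₀¹ f(x) dx = 0, then for every x ∈ ℝ one has f(x)² ≤ (1/12) ∫₀¹ g(y)² dy. -/
open MeasureTheory Real Set Filter

/-!
For `x ∈ [0, 1]` let `k_x(s) = s - x + 1/2` for `s ≤ x` and `k_x(s) = s - x - 1/2` for `s > x`,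
the periodised Bernoulli polynomial `1/2 - fract (x - s)`. Integrating by parts on `[0, x]` and
on `[x, 1]` gives `∫₀¹ k_x f' = f x + (1/2 - x) (f 1 - f 0) - ∫₀¹ f`, which is `f x` for a
periodic `f` of mean zero. Cauchy–Schwarz then bounds `f x ^ 2` by `∫₀¹ k_x² · ∫₀¹ f'²`, and
`∫₀¹ k_x² = ∫₀¹ (s - 1/2)² = 1/12`. Periodicity reduces an arbitrary `x` to `[0, 1)`.
-/

theorem sq_integral_mul_le {α : Type*} [MeasurableSpace α] {μ : Measure α} {u v : α → ℝ}
    (hu : Integrable (fun a => u a ^ 2) μ) (hv : Integrable (fun a => v a ^ 2) μ)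
    (huv : Integrable (fun a => u a * v a) μ) :
    (∫ a, u a * v a ∂μ) ^ 2 ≤ (∫ a, u a ^ 2 ∂μ) * ∫ a, v a ^ 2 ∂μ := by
  have hquad : ∀ t : ℝ,
      0 ≤ (∫ a, u a ^ 2 ∂μ) * (t * t) + 2 * (∫ a, u a * v a ∂μ) * t + ∫ a, v a ^ 2 ∂μ := by
    intro t
    have hexp : (fun a => (t * u a + v a) ^ 2)
        = fun a => t ^ 2 * u a ^ 2 + (2 * t * (u a * v a) + v a ^ 2) := by
      funext a; ring
    have hnonneg : 0 ≤ ∫ a, (t * u a + v a) ^ 2 ∂μ := integral_nonneg fun a => sq_nonneg _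
    have huv' : Integrable (fun a => 2 * t * (u a * v a) + v a ^ 2) μ :=
      (huv.const_mul _).add hv
    rw [hexp, integral_add (hu.const_mul _) huv', integral_add (huv.const_mul _) hv,
      integral_const_mul, integral_const_mul] at hnonneg
    linarith
  have hdiscrim := discrim_le_zero hquad
  rw [discrim] at hdiscrim
  linarith

section Primitive

variable {f g : ℝ → ℝ} {a b : ℝ}

theorem absolutelyContinuousOnInterval_of_eq_add_integral
    (hg : IntervalIntegrable g volume a b) (hf : ∀ x, f x = f a + ∫ y in a..x, g y) :
    AbsolutelyContinuousOnInterval f a b := by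
  rw [funext hf]
  exact contDiffOn_const.absolutelyContinuousOnInterval.add
    (hg.absolutelyContinuousOnInterval_intervalIntegral left_mem_uIcc)

theorem ae_deriv_eq_of_eq_add_integral
    (hg : IntervalIntegrable g volume a b) (hf : ∀ x, f x = f a + ∫ y in a..x, g y) :
    ∀ᵐ x, x ∈ uIcc a b → deriv f x = g x := by
  filter_upwards [hg.ae_hasDerivAt_integral] with x hx hxab
  rw [funext hf]
  exact ((hx hxab a left_mem_uIcc).const_add (f a)).deriv

end Primitive

theorem AbsolutelyContinuousOnInterval.integral_sub_mul_deriv {f : ℝ → ℝ} {a b : ℝ}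
    (hf : AbsolutelyContinuousOnInterval f a b) (c : ℝ) :
    ∫ s in a..b, (s - c) * deriv f s = (b - c) * f b - (a - c) * f a - ∫ s in a..b, f s := by
  have hlin : AbsolutelyContinuousOnInterval (fun s => s - c) a b :=
    (contDiff_id.sub contDiff_const).contDiffOn.absolutelyContinuousOnInterval
  simpa using hlin.integral_mul_deriv_eq_deriv_mul hf

noncomputable def sawtooth (x s : ℝ) : ℝ := if s ≤ x then s - x + 1 / 2 else s - x - 1 / 2

section Sawtooth

variable {x : ℝ}

theorem eqOn_sawtooth_left (hx : 0 ≤ x) :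
    EqOn (sawtooth x) (fun s => s - x + 1 / 2) (uIoc 0 x) :=
  fun _ hs => if_pos (by rw [uIoc_of_le hx] at hs; exact hs.2)

theorem eqOn_sawtooth_right (hx : x ≤ 1) :
    EqOn (sawtooth x) (fun s => s - x - 1 / 2) (uIoc x 1) :=
  fun _ hs => if_neg (by rw [uIoc_of_le hx] at hs; exact hs.1.not_ge)

theorem intervalIntegrable_sawtooth_comp (F : ℝ → ℝ → ℝ) (hx : x ∈ Icc (0 : ℝ) 1)
    (h₁ : IntervalIntegrable (fun s => F (s - x + 1 / 2) s) volume 0 x)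
    (h₂ : IntervalIntegrable (fun s => F (s - x - 1 / 2) s) volume x 1) :
    IntervalIntegrable (fun s => F (sawtooth x s) s) volume 0 1 :=
  (h₁.congr fun s hs => by rw [eqOn_sawtooth_left hx.1 hs]).trans
    (h₂.congr fun s hs => by rw [eqOn_sawtooth_right hx.2 hs])

theorem integral_sawtooth_comp (F : ℝ → ℝ → ℝ) (hx : x ∈ Icc (0 : ℝ) 1)
    (h₁ : IntervalIntegrable (fun s => F (s - x + 1 / 2) s) volume 0 x)
    (h₂ : IntervalIntegrable (fun s => F (s - x - 1 / 2) s) volume x 1) :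
    ∫ s in (0 : ℝ)..1, F (sawtooth x s) s
      = (∫ s in (0 : ℝ)..x, F (s - x + 1 / 2) s) + ∫ s in x..1, F (s - x - 1 / 2) s := by
  rw [← intervalIntegral.integral_add_adjacent_intervals
    (h₁.congr fun s hs => by rw [eqOn_sawtooth_left hx.1 hs])
    (h₂.congr fun s hs => by rw [eqOn_sawtooth_right hx.2 hs])]
  congr 1
  · exact intervalIntegral.integral_congr_ae
      (ae_of_all _ fun s hs => by rw [eqOn_sawtooth_left hx.1 hs])
  · exact intervalIntegral.integral_congr_ae
      (ae_of_all _ fun s hs => by rw [eqOn_sawtooth_right hx.2 hs])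

theorem intervalIntegrable_sawtooth_sq (hx : x ∈ Icc (0 : ℝ) 1) :
    IntervalIntegrable (fun s => sawtooth x s ^ 2) volume 0 1 :=
  intervalIntegrable_sawtooth_comp (fun k _ => k ^ 2) hx
    ((by fun_prop : Continuous _).intervalIntegrable _ _)
    ((by fun_prop : Continuous _).intervalIntegrable _ _)

theorem integral_sawtooth_sq (hx : x ∈ Icc (0 : ℝ) 1) :
    ∫ s in (0 : ℝ)..1, sawtooth x s ^ 2 = 1 / 12 := by
  rw [integral_sawtooth_comp (fun k _ => k ^ 2) hx
    ((by fun_prop : Continuous _).intervalIntegrable _ _)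
    ((by fun_prop : Continuous _).intervalIntegrable _ _)]
  simp only [sub_add, sub_sub, intervalIntegral.integral_comp_sub_right (fun s => s ^ 2),
    integral_pow]
  ring

theorem intervalIntegrable_sawtooth_mul {g : ℝ → ℝ} (hg : IntervalIntegrable g volume 0 1)
    (hx : x ∈ Icc (0 : ℝ) 1) :
    IntervalIntegrable (fun s => sawtooth x s * g s) volume 0 1 :=
  have hx' : x ∈ uIcc (0 : ℝ) 1 := by rwa [uIcc_of_le zero_le_one]
  intervalIntegrable_sawtooth_comp (fun k s => k * g s) hx
    ((hg.mono_set (uIcc_subset_uIcc left_mem_uIcc hx')).continuousOn_mul (by fun_prop))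
    ((hg.mono_set (uIcc_subset_uIcc hx' right_mem_uIcc)).continuousOn_mul (by fun_prop))

theorem AbsolutelyContinuousOnInterval.integral_sawtooth_mul_deriv {f : ℝ → ℝ}
    (hf : AbsolutelyContinuousOnInterval f 0 1) (hx : x ∈ Icc (0 : ℝ) 1) :
    ∫ s in (0 : ℝ)..1, sawtooth x s * deriv f s
      = f x + (1 / 2 - x) * (f 1 - f 0) - ∫ s in (0 : ℝ)..1, f s := by
  have hx' : x ∈ uIcc (0 : ℝ) 1 := by rwa [uIcc_of_le zero_le_one]
  have hf₁ := hf.mono (uIcc_subset_uIcc left_mem_uIcc hx')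
  have hf₂ := hf.mono (uIcc_subset_uIcc hx' right_mem_uIcc)
  rw [integral_sawtooth_comp (fun k s => k * deriv f s) hx
      (hf₁.intervalIntegrable_deriv.continuousOn_mul (by fun_prop))
      (hf₂.intervalIntegrable_deriv.continuousOn_mul (by fun_prop)),
    ← intervalIntegral.integral_add_adjacent_intervals hf₁.continuousOn.intervalIntegrable
      hf₂.continuousOn.intervalIntegrable]
  simp only [sub_add, sub_sub, hf₁.integral_sub_mul_deriv, hf₂.integral_sub_mul_deriv]
  ring

end Sawtooth

theorem stmt_0 (f g : ℝ → ℝ)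
    (hper : ∀ x : ℝ, f (x + 1) = f x)
    (hg : ∀ a b : ℝ, IntervalIntegrable g volume a b)
    (hg2 : ∀ a b : ℝ, IntervalIntegrable (fun y => g y ^ 2) volume a b)
    (hfg : ∀ x : ℝ, f x = f 0 + ∫ y in (0:ℝ)..x, g y)
    (hmean : (∫ x in (0:ℝ)..1, f x) = 0) :
    ∀ x : ℝ, f x ^ 2 ≤ 1 / 12 * ∫ y in (0:ℝ)..1, g y ^ 2 := by
  have hf : AbsolutelyContinuousOnInterval f 0 1 :=
    absolutelyContinuousOnInterval_of_eq_add_integral (hg 0 1) hfg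
  have hrepr : ∀ x ∈ Icc (0 : ℝ) 1, f x = ∫ s in (0 : ℝ)..1, sawtooth x s * g s := by
    intro x hx
    have hderiv : ∫ s in (0 : ℝ)..1, sawtooth x s * deriv f s
        = ∫ s in (0 : ℝ)..1, sawtooth x s * g s :=
      intervalIntegral.integral_congr_ae ((ae_deriv_eq_of_eq_add_integral (hg 0 1) hfg).mono
        fun s hs hs' => by rw [hs (uIoc_subset_uIcc hs')])
    rw [← hderiv, hf.integral_sawtooth_mul_deriv hx, hmean, ← zero_add 1, hper]
    ring
  intro x
  obtain ⟨y, ⟨hy₀, hy₁⟩, hxy⟩ := Function.Periodic.exists_mem_Ico₀ hper one_pos x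
  have hy : y ∈ Icc (0 : ℝ) 1 := ⟨hy₀, hy₁.le⟩
  calc f x ^ 2 = (∫ s in (0 : ℝ)..1, sawtooth y s * g s) ^ 2 := by rw [hxy, hrepr y hy]
    _ ≤ (∫ s in (0 : ℝ)..1, sawtooth y s ^ 2) * ∫ s in (0 : ℝ)..1, g s ^ 2 := by
      simp only [intervalIntegral.integral_of_le zero_le_one]
      exact sq_integral_mul_le (intervalIntegrable_sawtooth_sq hy).1 (hg2 0 1).1
        (intervalIntegrable_sawtooth_mul (hg 0 1) hy).1
    _ = 1 / 12 * ∫ s in (0 : ℝ)..1, g s ^ 2 := by rw [integral_sawtooth_sq hy]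
end

section
/- Let (u, ρ) be a smooth solution of the periodic two-component μ-Hunter-Saxton system on [0,∞). Then the energy t ↦ ∫₀¹ (u_x(t,y)² + ρ(t,y)²) dy is constant in time; in particular ∫₀¹ (u_x(t,y)² + ρ(t,y)²) dy = μ₁² for all t ≥ 0. -/
/-! The densities of the mean `∫ u` and of the energy `∫ (u_x² + ρ²)` both evolve by
`x`-derivatives of 1-periodic fluxes, so their integrals over a period are constant in time.
For the mean, integrate the momentum equation over a period: every term except `d/dt ∫ u` is an
exact derivative. Once the mean is constant, the momentum equation expresses `u_xxt` and the
continuity equation `ρ_t` through spatial derivatives, and this turns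
`∂ₜ (u_x² + ρ²) = 2 u_x u_xt + 2 ρ ρ_t` into an exact `x`-derivative after one integration by
parts. -/

open MeasureTheory Real Set Filter
open Function
open scoped ContDiff

noncomputable def partialT (f : ℝ → ℝ → ℝ) : ℝ → ℝ → ℝ :=
  fun t x => deriv (fun s => f s x) t

noncomputable def partialX (f : ℝ → ℝ → ℝ) : ℝ → ℝ → ℝ := fun t => deriv (f t)

section Calculus

variable {E : Type*} [NormedAddCommGroup E] [NormedSpace ℝ E]

theorem HasFDerivAt.hasDerivAt_fst_slice {G : ℝ × ℝ → E} {G' : ℝ × ℝ →L[ℝ] E} {t x : ℝ}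
    (h : HasFDerivAt G G' (t, x)) : HasDerivAt (fun s => G (s, x)) (G' (1, 0)) t :=
  h.comp_hasDerivAt t ((hasDerivAt_id t).prodMk (hasDerivAt_const t x))

theorem HasFDerivAt.hasDerivAt_snd_slice {G : ℝ × ℝ → E} {G' : ℝ × ℝ →L[ℝ] E} {t x : ℝ}
    (h : HasFDerivAt G G' (t, x)) : HasDerivAt (fun y => G (t, y)) (G' (0, 1)) x :=
  h.comp_hasDerivAt x ((hasDerivAt_const x t).prodMk (hasDerivAt_id x))

variable {f : ℝ → ℝ → ℝ}

theorem hasDerivAt_partialT {t x : ℝ} (hf : DifferentiableAt ℝ (uncurry f) (t, x)) :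
    HasDerivAt (fun s => f s x) (partialT f t x) t :=
  hf.hasFDerivAt.hasDerivAt_fst_slice.differentiableAt.hasDerivAt

theorem hasDerivAt_partialX {t x : ℝ} (hf : DifferentiableAt ℝ (uncurry f) (t, x)) :
    HasDerivAt (f t) (partialX f t x) x :=
  hf.hasFDerivAt.hasDerivAt_snd_slice.differentiableAt.hasDerivAt

theorem partialT_eq_fderiv {t x : ℝ} (hf : DifferentiableAt ℝ (uncurry f) (t, x)) :
    partialT f t x = fderiv ℝ (uncurry f) (t, x) (1, 0) :=
  hf.hasFDerivAt.hasDerivAt_fst_slice.deriv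

theorem partialX_eq_fderiv {t x : ℝ} (hf : DifferentiableAt ℝ (uncurry f) (t, x)) :
    partialX f t x = fderiv ℝ (uncurry f) (t, x) (0, 1) :=
  hf.hasFDerivAt.hasDerivAt_snd_slice.deriv

variable {m n : WithTop ℕ∞}

theorem ContDiff.uncurry_partialT (hf : ContDiff ℝ n (uncurry f)) (hmn : m + 1 ≤ n) :
    ContDiff ℝ m (uncurry (partialT f)) := by
  have hd : Differentiable ℝ (uncurry f) :=
    hf.differentiable (ne_bot_of_le_ne_bot (by simp) hmn)
  convert (hf.fderiv_right hmn).clm_apply contDiff_const with ⟨t, x⟩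
  exact partialT_eq_fderiv (hd (t, x))

theorem ContDiff.uncurry_partialX (hf : ContDiff ℝ n (uncurry f)) (hmn : m + 1 ≤ n) :
    ContDiff ℝ m (uncurry (partialX f)) := by
  have hd : Differentiable ℝ (uncurry f) :=
    hf.differentiable (ne_bot_of_le_ne_bot (by simp) hmn)
  convert (hf.fderiv_right hmn).clm_apply contDiff_const with ⟨t, x⟩
  exact partialX_eq_fderiv (hd (t, x))

theorem ContDiff.hasDerivAt_partialX (hf : ContDiff ℝ ∞ (uncurry f))
    (t x : ℝ) : HasDerivAt (f t) (partialX f t x) x :=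
  _root_.hasDerivAt_partialX (hf.differentiable (by simp) _)

theorem ContDiff.hasDerivAt_partialT (hf : ContDiff ℝ ∞ (uncurry f))
    (t x : ℝ) : HasDerivAt (fun s => f s x) (partialT f t x) t :=
  _root_.hasDerivAt_partialT (hf.differentiable (by simp) _)

theorem partialT_partialX_comm (hf : ContDiff ℝ 2 (uncurry f)) :
    partialT (partialX f) = partialX (partialT f) := by
  have hd : Differentiable ℝ (uncurry f) := hf.differentiable (by simp)
  have hd' : Differentiable ℝ (fderiv ℝ (uncurry f)) :=
    (hf.fderiv_right (m := 1) (by norm_num)).differentiable (by simp)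
  ext t x
  have hT : HasDerivAt (fun s => partialX f s x)
      (fderiv ℝ (fderiv ℝ (uncurry f)) (t, x) (1, 0) (0, 1)) t := by
    simp only [partialX_eq_fderiv (hd _)]
    simpa using
      (hd' (t, x)).hasFDerivAt.hasDerivAt_fst_slice.clm_apply (hasDerivAt_const t (0, 1))
  have hX : HasDerivAt (partialT f t)
      (fderiv ℝ (fderiv ℝ (uncurry f)) (t, x) (0, 1) (1, 0)) x := by
    have : partialT f t = fun y => fderiv ℝ (uncurry f) (t, y) (1, 0) :=
      funext fun y => partialT_eq_fderiv (hd _)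
    rw [this]
    simpa using
      (hd' (t, x)).hasFDerivAt.hasDerivAt_snd_slice.clm_apply (hasDerivAt_const x (1, 0))
  rw [partialT, hT.deriv, partialX, hX.deriv]
  exact (hf.contDiffAt.isSymmSndFDerivAt (by simp)) _ _

end Calculus

theorem Function.Periodic.partialX {f : ℝ → ℝ → ℝ} {c : ℝ} (hf : ∀ t, Periodic (f t) c)
    (t : ℝ) : Periodic (partialX f t) c := fun x => by
  rw [_root_.partialX, ← deriv_comp_add_const, (hf t).funext]

theorem Function.Periodic.partialT {f : ℝ → ℝ → ℝ} {c : ℝ} (hf : ∀ t, Periodic (f t) c)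
    (t : ℝ) : Periodic (partialT f t) c := fun x => by
  simp only [_root_.partialT, hf _ x]

theorem Function.Periodic.intervalIntegral_eq_zero_of_hasDerivAt {Φ g : ℝ → ℝ} {T : ℝ}
    (hΦ : Periodic Φ T) (hderiv : ∀ x, HasDerivAt Φ (g x) x)
    (hg : IntervalIntegrable g volume 0 T) : ∫ x in (0 : ℝ)..T, g x = 0 := by
  rw [intervalIntegral.integral_eq_sub_of_hasDerivAt (fun x _ => hderiv x) hg, ← zero_add T,
    hΦ 0, sub_self]

theorem hasDerivAt_intervalIntegral_of_contDiff {f : ℝ → ℝ → ℝ}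
    (hf : ContDiff ℝ 1 (uncurry f)) (a b t : ℝ) :
    HasDerivAt (fun s => ∫ y in a..b, f s y) (∫ y in a..b, partialT f t y) t := by
  have hf' : Continuous (uncurry (partialT f)) :=
    (hf.uncurry_partialT (m := 0) le_rfl).continuous
  obtain ⟨C, hC⟩ :
      ∃ C, ∀ p ∈ Icc (t - 1) (t + 1) ×ˢ uIcc a b, ‖uncurry (partialT f) p‖ ≤ C :=
    (isCompact_Icc.prod isCompact_uIcc).exists_bound_of_continuousOn hf'.continuousOn
  have hslice {g : ℝ → ℝ → ℝ} (hg : Continuous (uncurry g)) (s : ℝ) : Continuous (g s) :=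
    hg.comp (continuous_const.prodMk continuous_id)
  refine (intervalIntegral.hasDerivAt_integral_of_dominated_loc_of_deriv_le
    (bound := fun _ => C) (Metric.ball_mem_nhds t one_pos)
    (.of_forall fun s => (hslice hf.continuous s).aestronglyMeasurable)
    ((hslice hf.continuous t).intervalIntegrable a b)
    (hslice hf' t).aestronglyMeasurable
    (.of_forall fun y hy s hs => hC (s, y) ⟨?_, uIoc_subset_uIcc hy⟩)
    intervalIntegrable_const
    (.of_forall fun y _ s _ => hasDerivAt_partialT (hf.differentiable one_ne_zero _))).2
  rw [Metric.mem_ball, Real.dist_eq, abs_lt] at hs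
  constructor <;> linarith [hs.1, hs.2]

noncomputable def mean (f : ℝ → ℝ → ℝ) (t : ℝ) : ℝ := ∫ y in (0 : ℝ)..1, f t y

theorem hasDerivAt_mean_eq_zero_of_flux {e : ℝ → ℝ → ℝ} {Φ : ℝ → ℝ} {t : ℝ}
    (he : ContDiff ℝ 1 (uncurry e)) (hΦ : Periodic Φ 1)
    (hflux : ∀ x, HasDerivAt Φ (partialT e t x) x) : HasDerivAt (mean e) 0 t := by
  have hcont : Continuous (partialT e t) :=
    (he.uncurry_partialT (m := 0) le_rfl).continuous.comp (continuous_const.prodMk continuous_id)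
  rw [← hΦ.intervalIntegral_eq_zero_of_hasDerivAt hflux (hcont.intervalIntegrable 0 1)]
  exact hasDerivAt_intervalIntegral_of_contDiff he 0 1 t

noncomputable def energyDensity (u ρ : ℝ → ℝ → ℝ) : ℝ → ℝ → ℝ :=
  fun t x => partialX u t x ^ 2 + ρ t x ^ 2

def MomentumEq (γ : ℝ) (u ρ : ℝ → ℝ → ℝ) (t : ℝ) : Prop :=
  ∀ x, deriv (mean u) t - partialT (partialX (partialX u)) t x =
    2 * mean u t * partialX u t x - 2 * partialX u t x * partialX (partialX u) t x
      - u t x * partialX (partialX (partialX u)) t x + ρ t x * partialX ρ t x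
      - γ * partialX (partialX (partialX u)) t x

def ContinuityEq (γ : ℝ) (u ρ : ℝ → ℝ → ℝ) (t : ℝ) : Prop :=
  ∀ x, partialT ρ t x = partialX (fun s y => ρ s y * u s y) t x + γ * partialX ρ t x

noncomputable def momentumFlux (γ : ℝ) (u ρ : ℝ → ℝ → ℝ) (t : ℝ) : ℝ → ℝ := fun x =>
  partialT (partialX u) t x + 2 * mean u t * u t x - partialX u t x ^ 2 / 2
    - u t x * partialX (partialX u) t x + ρ t x ^ 2 / 2 - γ * partialX (partialX u) t x

noncomputable def energyFlux (γ : ℝ) (u ρ : ℝ → ℝ → ℝ) (t : ℝ) : ℝ → ℝ := fun x =>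
  2 * u t x * partialT (partialX u) t x + 2 * mean u t * u t x ^ 2
    - 2 * u t x ^ 2 * partialX (partialX u) t x + 2 * u t x * ρ t x ^ 2
    - 2 * γ * u t x * partialX (partialX u) t x + γ * partialX u t x ^ 2 + γ * ρ t x ^ 2

section MuHunterSaxton

variable {γ t : ℝ} {u ρ : ℝ → ℝ → ℝ}

theorem hasDerivAt_momentumFlux (hu : ContDiff ℝ ∞ (uncurry u)) (hρ : ContDiff ℝ ∞ (uncurry ρ))
    (h : MomentumEq γ u ρ t) (x : ℝ) :
    HasDerivAt (momentumFlux γ u ρ t) (deriv (mean u) t) x := by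
  have hux := hu.uncurry_partialX (m := ∞) le_rfl
  have huxx := hux.uncurry_partialX (m := ∞) le_rfl
  have hd {g : ℝ → ℝ → ℝ} (hg : ContDiff ℝ ∞ (uncurry g)) := hg.hasDerivAt_partialX t x
  have huxt := hux.uncurry_partialT (m := ∞) le_rfl
  have hΨ := (((((hd huxt).fun_add
    ((hd hu).const_mul (2 * mean u t))).fun_sub (((hd hux).fun_pow 2).div_const 2)).fun_sub
    ((hd hu).fun_mul (hd huxx))).fun_add (((hd hρ).fun_pow 2).div_const 2)).fun_sub
    ((hd huxx).const_mul γ)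
  refine hΨ.congr_deriv ?_
  rw [← partialT_partialX_comm (hux.of_le (by norm_cast))]
  linear_combination (h x).symm

theorem periodic_momentumFlux (huper : ∀ t, Periodic (u t) 1) (hρper : ∀ t, Periodic (ρ t) 1) :
    Periodic (momentumFlux γ u ρ t) 1 := fun x => by
  have hux := Periodic.partialX huper
  simp only [momentumFlux, huper t x, hρper t x, hux t x, Periodic.partialX hux t x,
    Periodic.partialT hux t x]

theorem periodic_energyFlux (huper : ∀ t, Periodic (u t) 1) (hρper : ∀ t, Periodic (ρ t) 1) :
    Periodic (energyFlux γ u ρ t) 1 := fun x => by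
  have hux := Periodic.partialX huper
  simp only [energyFlux, huper t x, hρper t x, hux t x, Periodic.partialX hux t x,
    Periodic.partialT hux t x]

theorem deriv_mean_eq_zero (hu : ContDiff ℝ ∞ (uncurry u)) (hρ : ContDiff ℝ ∞ (uncurry ρ))
    (huper : ∀ t, Periodic (u t) 1) (hρper : ∀ t, Periodic (ρ t) 1) (h : MomentumEq γ u ρ t) :
    deriv (mean u) t = 0 := by
  simpa using (periodic_momentumFlux huper hρper).intervalIntegral_eq_zero_of_hasDerivAt
    (hasDerivAt_momentumFlux hu hρ h) intervalIntegrable_const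

theorem partialT_energyDensity (hu : ContDiff ℝ ∞ (uncurry u)) (hρ : ContDiff ℝ ∞ (uncurry ρ))
    (x : ℝ) : partialT (energyDensity u ρ) t x =
      2 * partialX u t x * partialT (partialX u) t x + 2 * ρ t x * partialT ρ t x := by
  have hux := hu.uncurry_partialX (m := ∞) le_rfl
  refine (((hux.hasDerivAt_partialT t x).fun_pow 2).fun_add
    ((hρ.hasDerivAt_partialT t x).fun_pow 2)).deriv.trans ?_
  ring

theorem hasDerivAt_energyFlux (hu : ContDiff ℝ ∞ (uncurry u)) (hρ : ContDiff ℝ ∞ (uncurry ρ))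
    (huper : ∀ t, Periodic (u t) 1) (hρper : ∀ t, Periodic (ρ t) 1)
    (h1 : MomentumEq γ u ρ t) (h2 : ContinuityEq γ u ρ t) (x : ℝ) :
    HasDerivAt (energyFlux γ u ρ t) (partialT (energyDensity u ρ) t x) x := by
  have hux := hu.uncurry_partialX (m := ∞) le_rfl
  have huxx := hux.uncurry_partialX (m := ∞) le_rfl
  have hd {g : ℝ → ℝ → ℝ} (hg : ContDiff ℝ ∞ (uncurry g)) := hg.hasDerivAt_partialX t x
  have huxt := hux.uncurry_partialT (m := ∞) le_rfl
  have hΦ := ((((((((hd hu).const_mul 2).fun_mul (hd huxt)).fun_add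
    (((hd hu).fun_pow 2).const_mul (2 * mean u t))).fun_sub
    ((((hd hu).fun_pow 2).const_mul 2).fun_mul (hd huxx))).fun_add
    (((hd hu).const_mul 2).fun_mul ((hd hρ).fun_pow 2))).fun_sub
    (((hd hu).const_mul (2 * γ)).fun_mul (hd huxx))).fun_add
    (((hd hux).fun_pow 2).const_mul γ)).fun_add (((hd hρ).fun_pow 2).const_mul γ)
  refine hΦ.congr_deriv ?_
  have hmom := h1 x
  rw [deriv_mean_eq_zero hu hρ huper hρper h1] at hmom
  have hcont := h2 x
  rw [partialX, ((hd hρ).fun_mul (hd hu)).deriv] at hcont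
  rw [partialT_energyDensity hu hρ, hcont, ← partialT_partialX_comm (hux.of_le (by norm_cast))]
  -- `2 u_x u_xt = (2 u u_xt)_x - 2 u u_xxt`, and `u_xxt` is given by the momentum equation
  linear_combination (-2 * u t x) * hmom

theorem hasDerivAt_energy (hu : ContDiff ℝ ∞ (uncurry u)) (hρ : ContDiff ℝ ∞ (uncurry ρ))
    (huper : ∀ t, Periodic (u t) 1) (hρper : ∀ t, Periodic (ρ t) 1)
    (h1 : MomentumEq γ u ρ t) (h2 : ContinuityEq γ u ρ t) :
    HasDerivAt (mean (energyDensity u ρ)) 0 t := by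
  have he : ContDiff ℝ 1 (uncurry (energyDensity u ρ)) :=
    (((hu.uncurry_partialX (m := ∞) le_rfl).pow 2).add (hρ.pow 2)).of_le (by norm_cast)
  exact hasDerivAt_mean_eq_zero_of_flux he (periodic_energyFlux huper hρper)
    (hasDerivAt_energyFlux hu hρ huper hρper h1 h2)

end MuHunterSaxton

theorem stmt_2_general
    (γ : ℝ) (u ρ : ℝ → ℝ → ℝ) (μ₁ : ℝ)
    (hu : ContDiff ℝ (⊤ : ℕ∞) (Function.uncurry u))
    (hρ : ContDiff ℝ (⊤ : ℕ∞) (Function.uncurry ρ))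
    (huper : ∀ t x : ℝ, u t (x + 1) = u t x)
    (hρper : ∀ t x : ℝ, ρ t (x + 1) = ρ t x)
    (heq1 : ∀ t x : ℝ, 0 ≤ t →
      deriv (fun s => ∫ y in (0:ℝ)..1, u s y) t
        - deriv (fun s => deriv (deriv (u s)) x) t
      = 2 * (∫ y in (0:ℝ)..1, u t y) * deriv (u t) x
        - 2 * deriv (u t) x * deriv (deriv (u t)) x
        - u t x * deriv (deriv (deriv (u t))) x
        + ρ t x * deriv (ρ t) x
        - γ * deriv (deriv (deriv (u t))) x)
    (heq2 : ∀ t x : ℝ, 0 ≤ t →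
      deriv (fun s => ρ s x) t
      = deriv (fun y => ρ t y * u t y) x + γ * deriv (ρ t) x)
    (hμ₁ : μ₁ = Real.sqrt (∫ y in (0:ℝ)..1, ((deriv (u 0) y) ^ 2 + (ρ 0 y) ^ 2)))
    : ∀ t : ℝ, 0 ≤ t → (∫ y in (0:ℝ)..1, ((deriv (u t) y) ^ 2 + (ρ t y) ^ 2)) = μ₁ ^ 2 := by
  have hE : ∀ s ∈ Ici (0 : ℝ), HasDerivAt (mean (energyDensity u ρ)) 0 s := fun s hs =>
    hasDerivAt_energy hu hρ huper hρper (fun x => heq1 s x hs) (fun x => heq2 s x hs)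
  intro t ht
  have hconst : mean (energyDensity u ρ) t = mean (energyDensity u ρ) 0 :=
    constant_of_has_deriv_right_zero (fun s hs => (hE s hs.1).continuousAt.continuousWithinAt)
      (fun s hs => (hE s hs.1).hasDerivWithinAt) t ⟨ht, le_rfl⟩
  have hnonneg : 0 ≤ mean (energyDensity u ρ) 0 :=
    intervalIntegral.integral_nonneg zero_le_one fun _ _ => add_nonneg (sq_nonneg _) (sq_nonneg _)
  rw [hμ₁]
  exact hconst.trans (sq_sqrt hnonneg).symm

theorem stmt_2
    (γ : ℝ) (u ρ : ℝ → ℝ → ℝ) (μ₀ μ₁ : ℝ)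
    (hu : ContDiff ℝ (⊤ : ℕ∞) (Function.uncurry u))
    (hρ : ContDiff ℝ (⊤ : ℕ∞) (Function.uncurry ρ))
    (huper : ∀ t x : ℝ, u t (x + 1) = u t x)
    (hρper : ∀ t x : ℝ, ρ t (x + 1) = ρ t x)
    (heq1 : ∀ t x : ℝ, 0 ≤ t →
      deriv (fun s => ∫ y in (0:ℝ)..1, u s y) t
        - deriv (fun s => deriv (deriv (u s)) x) t
      = 2 * (∫ y in (0:ℝ)..1, u t y) * deriv (u t) x
        - 2 * deriv (u t) x * deriv (deriv (u t)) x
        - u t x * deriv (deriv (deriv (u t))) x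
        + ρ t x * deriv (ρ t) x
        - γ * deriv (deriv (deriv (u t))) x)
    (heq2 : ∀ t x : ℝ, 0 ≤ t →
      deriv (fun s => ρ s x) t
      = deriv (fun y => ρ t y * u t y) x + γ * deriv (ρ t) x)
    (hμ₀ : μ₀ = ∫ y in (0:ℝ)..1, u 0 y)
    (hμ₁ : μ₁ = Real.sqrt (∫ y in (0:ℝ)..1, ((deriv (u 0) y) ^ 2 + (ρ 0 y) ^ 2)))
    : ∀ t : ℝ, 0 ≤ t → (∫ y in (0:ℝ)..1, ((deriv (u t) y) ^ 2 + (ρ t y) ^ 2)) = μ₁ ^ 2 :=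
  stmt_2_general γ u ρ μ₁ hu hρ huper hρper heq1 heq2 hμ₁
end

section
/- Let g : ℝ → ℝ be the 1-periodic function with g(x) = (1/2)x(x−1) + 13/12 for x ∈ [0,1), and let w : ℝ → ℝ be continuous and 1-periodic. Define v(x) = ∫₀¹ g(x−y) w(y) dy. Then ∫₀¹ v(y) dy = ∫₀¹ w(y) dy, v is twice differentiable on ℝ, and for every x ∈ ℝ, ∫₀¹ v(y) dy − v″(x) = w(x). In particular, ∫₀¹ g(y) dy = 1. -/
open MeasureTheory Real Set Filter

/-! On each window `[x - 1, x]` the kernel `y ↦ g (x - y)` is the quadratic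
`greenProfile (x - y) = (x² - x + 13/6) / 2 + (1/2 - x) y + y² / 2`, so after shifting the
period of integration `v x` is a polynomial combination of the window moments
`∫_{x-1}^x yᵏ w y` (`k ≤ 2`). For periodic `w` such a moment has derivative
`(xᵏ - (x - 1)ᵏ) w x`, and differentiating twice gives `v'' = ∫ w - w`.
The mean identity is Fubini together with `∫ g = 1`. -/

namespace Function.Periodic

variable {g f : ℝ → ℝ}

lemma eq_comp_fract (hg : Periodic g 1) (h : EqOn g f (Ico 0 1)) : g = f ∘ Int.fract := by
  funext x
  rw [Function.comp_apply, ← h ⟨Int.fract_nonneg x, Int.fract_lt_one x⟩, Int.fract,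
    ← hg.sub_int_mul_eq ⌊x⌋ (x := x), mul_one]

lemma continuous_of_eqOn_Ico (hg : Periodic g 1) (hf : ContinuousOn f (Icc 0 1))
    (h01 : f 0 = f 1) (h : EqOn g f (Ico 0 1)) : Continuous g := by
  rw [hg.eq_comp_fract h]
  exact hf.comp_fract'' h01

lemma eqOn_Icc_of_eqOn_Ico (hg : Periodic g 1) (h01 : f 0 = f 1) (h : EqOn g f (Ico 0 1)) :
    EqOn g f (Icc 0 1) := by
  rintro x ⟨hx0, hx1⟩
  rcases hx1.eq_or_lt with rfl | hx1
  · simpa [← h01, h ⟨le_rfl, one_pos⟩] using hg 0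
  · exact h ⟨hx0, hx1⟩

lemma integral_integral_sub_mul {T : ℝ} {w : ℝ → ℝ} (hg : Periodic g T) (hT : 0 ≤ T)
    (hgc : Continuous g) (hw : Continuous w) :
    ∫ x in 0..T, ∫ y in 0..T, g (x - y) * w y = (∫ x in 0..T, g x) * ∫ y in 0..T, w y := by
  have hmean (y : ℝ) : ∫ x in 0..T, g (x - y) = ∫ x in 0..T, g x := by
    rw [intervalIntegral.integral_comp_sub_right, zero_sub, sub_eq_neg_add,
      hg.intervalIntegral_add_eq (-y) 0, zero_add]
  have hint : Integrable (Function.uncurry fun x y => g (x - y) * w y)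
      ((volume.restrict (Ioc 0 T)).prod (volume.restrict (Ioc 0 T))) := by
    rw [Measure.prod_restrict]
    refine (ContinuousOn.integrableOn_compact (isCompact_Icc.prod isCompact_Icc) ?_).mono_set
      (prod_mono Ioc_subset_Icc_self Ioc_subset_Icc_self)
    exact (by fun_prop : Continuous fun p : ℝ × ℝ => g (p.1 - p.2) * w p.2).continuousOn
  simp only [intervalIntegral.integral_of_le hT]
  rw [integral_integral_swap hint]
  simp only [← intervalIntegral.integral_of_le hT, intervalIntegral.integral_mul_const, hmean,
    intervalIntegral.integral_const_mul]

end Function.Periodic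

lemma hasDerivAt_integral_sub_const_self {f : ℝ → ℝ} (hf : Continuous f) (T x : ℝ) :
    HasDerivAt (fun x => ∫ y in (x - T)..x, f y) (f x - f (x - T)) x := by
  have hF (x : ℝ) : HasDerivAt (fun x => ∫ y in 0..x, f y) (f x) x :=
    (hf.integral_hasStrictDerivAt 0 x).hasDerivAt
  have hwindow : (fun x => ∫ y in (x - T)..x, f y)
      = fun x => (∫ y in 0..x, f y) - ∫ y in 0..(x - T), f y := by
    funext x
    exact (intervalIntegral.integral_interval_sub_left (hf.intervalIntegrable _ _)
      (hf.intervalIntegrable _ _)).symm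
  rw [hwindow]
  exact (hF x).sub (by simpa using (hF (x - T)).comp_sub_const x T)

noncomputable def windowMoment (w : ℝ → ℝ) (n : ℕ) (x : ℝ) : ℝ :=
  ∫ y in (x - 1)..x, y ^ n * w y

lemma hasDerivAt_windowMoment {w : ℝ → ℝ} (hw : Continuous w) (hwper : Function.Periodic w 1)
    (n : ℕ) (x : ℝ) :
    HasDerivAt (windowMoment w n) ((x ^ n - (x - 1) ^ n) * w x) x := by
  have h := hasDerivAt_integral_sub_const_self
    (by fun_prop : Continuous fun y : ℝ => y ^ n * w y) 1 x
  rw [hwper.sub_eq] at h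
  exact h.congr_deriv (by ring)

noncomputable def greenProfile (t : ℝ) : ℝ := 1 / 2 * t * (t - 1) + 13 / 12

lemma continuous_greenProfile : Continuous greenProfile := by
  unfold greenProfile
  fun_prop

lemma greenProfile_zero_eq_greenProfile_one : greenProfile 0 = greenProfile 1 := by
  norm_num [greenProfile]

lemma integral_greenProfile : ∫ t in (0 : ℝ)..1, greenProfile t = 1 := by
  have hF (t : ℝ) :
      HasDerivAt (fun t : ℝ => t ^ 3 / 6 - t ^ 2 / 4 + 13 / 12 * t) (greenProfile t) t :=
    ((((hasDerivAt_pow 3 t).div_const 6).sub ((hasDerivAt_pow 2 t).div_const 4)).add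
      ((hasDerivAt_id' t).const_mul (13 / 12))).congr_deriv (by norm_num [greenProfile]; ring)
  rw [intervalIntegral.integral_eq_sub_of_hasDerivAt (fun t _ => hF t)
    (continuous_greenProfile.intervalIntegrable 0 1)]
  norm_num

section GreenKernel

variable {g w : ℝ → ℝ}

lemma integral_green_mul_eq (hg : Function.Periodic g 1)
    (hgq : EqOn g greenProfile (Icc 0 1))
    (hw : Continuous w) (hwper : Function.Periodic w 1) (x : ℝ) :
    ∫ y in 0..1, g (x - y) * w y = (1 / 2 * x ^ 2 - 1 / 2 * x + 13 / 12) * (∫ y in 0..1, w y)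
      + (1 / 2 - x) * windowMoment w 1 x + 1 / 2 * windowMoment w 2 x := by
  have hper : Function.Periodic (fun y => g (x - y) * w y) 1 := fun y => by
    simp only [hwper y, ← sub_sub, hg.sub_eq]
  have hmean : ∫ y in (x - 1)..x, w y = ∫ y in 0..1, w y := by
    simpa using hwper.intervalIntegral_add_eq (x - 1) 0
  have hwindow : ∫ y in 0..1, g (x - y) * w y
      = ∫ y in (x - 1)..x, (1 / 2 * x ^ 2 - 1 / 2 * x + 13 / 12) * w y
          + (1 / 2 - x) * (y ^ 1 * w y) + 1 / 2 * (y ^ 2 * w y) := by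
    have hshift := hper.intervalIntegral_add_eq (x - 1) 0
    rw [sub_add_cancel, zero_add] at hshift
    rw [← hshift]
    refine intervalIntegral.integral_congr fun y hy => ?_
    rw [uIcc_of_le (by linarith)] at hy
    rw [hgq ⟨by linarith [hy.2], by linarith [hy.1]⟩, greenProfile]
    ring
  rw [hwindow, intervalIntegral.integral_add, intervalIntegral.integral_add,
    intervalIntegral.integral_const_mul, intervalIntegral.integral_const_mul,
    intervalIntegral.integral_const_mul, hmean]
  · rfl
  all_goals apply Continuous.intervalIntegrable; fun_prop

lemma hasDerivAt_integral_green_mul (hg : Function.Periodic g 1)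
    (hgq : EqOn g greenProfile (Icc 0 1))
    (hw : Continuous w) (hwper : Function.Periodic w 1) (x : ℝ) :
    HasDerivAt (fun x => ∫ y in 0..1, g (x - y) * w y)
      ((x - 1 / 2) * (∫ y in 0..1, w y) - windowMoment w 1 x) x := by
  simp only [integral_green_mul_eq hg hgq hw hwper]
  have hquad : HasDerivAt (fun x : ℝ => 1 / 2 * x ^ 2 - 1 / 2 * x + 13 / 12) (x - 1 / 2) x :=
    ((((hasDerivAt_pow 2 x).const_mul (1 / 2)).sub
      ((hasDerivAt_id' x).const_mul (1 / 2))).add_const (13 / 12)).congr_deriv (by norm_num; ring)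
  have hlin : HasDerivAt (fun x : ℝ => 1 / 2 - x) (-1) x := (hasDerivAt_id' x).const_sub (1 / 2)
  have hM1 := hasDerivAt_windowMoment hw hwper 1 x
  have hM2 := hasDerivAt_windowMoment hw hwper 2 x
  exact (((hquad.mul_const _).add (hlin.mul hM1)).add (hM2.const_mul (1 / 2))).congr_deriv
    (by ring)

end GreenKernel

lemma hasDerivAt_mul_sub_windowMoment_one {w : ℝ → ℝ} (hw : Continuous w)
    (hwper : Function.Periodic w 1) (c x : ℝ) :
    HasDerivAt (fun x => (x - 1 / 2) * c - windowMoment w 1 x) (c - w x) x :=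
  ((((hasDerivAt_id' x).sub_const (1 / 2)).mul_const c).sub
    (hasDerivAt_windowMoment hw hwper 1 x)).congr_deriv (by ring)

theorem stmt_6 (g w v : ℝ → ℝ)
    (hgper : ∀ x : ℝ, g (x + 1) = g x)
    (hgval : ∀ x ∈ Set.Ico (0:ℝ) 1, g x = 1 / 2 * x * (x - 1) + 13 / 12)
    (hw : Continuous w)
    (hwper : ∀ x : ℝ, w (x + 1) = w x)
    (hv : ∀ x : ℝ, v x = ∫ y in (0:ℝ)..1, g (x - y) * w y) :
    (∫ y in (0:ℝ)..1, v y) = (∫ y in (0:ℝ)..1, w y) ∧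
    (∃ v' : ℝ → ℝ, (∀ x : ℝ, HasDerivAt v (v' x) x) ∧
      ∀ x : ℝ, HasDerivAt v' ((∫ y in (0:ℝ)..1, v y) - w x) x) ∧
    (∫ y in (0:ℝ)..1, g y) = 1 := by
  have hg : EqOn g greenProfile (Ico 0 1) := hgval
  have hgc : Continuous g := Function.Periodic.continuous_of_eqOn_Ico hgper
    continuous_greenProfile.continuousOn greenProfile_zero_eq_greenProfile_one hg
  have hgq := Function.Periodic.eqOn_Icc_of_eqOn_Ico hgper greenProfile_zero_eq_greenProfile_one hg
  have hgint : ∫ y in (0:ℝ)..1, g y = 1 := by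
    rw [intervalIntegral.integral_congr (hgq.mono (uIcc_of_le zero_le_one).subset),
      integral_greenProfile]
  have hv_eq : v = fun x => ∫ y in (0:ℝ)..1, g (x - y) * w y := funext hv
  have hmean : ∫ y in (0:ℝ)..1, v y = ∫ y in (0:ℝ)..1, w y := by
    rw [hv_eq, Function.Periodic.integral_integral_sub_mul hgper zero_le_one hgc hw, hgint, one_mul]
  refine ⟨hmean, ⟨fun x => (x - 1 / 2) * (∫ y in (0:ℝ)..1, w y) - windowMoment w 1 x,
    fun x => ?_, fun x => ?_⟩, hgint⟩
  · rw [hv_eq]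
    exact hasDerivAt_integral_green_mul hgper hgq hw hwper x
  · rw [hmean]
    exact hasDerivAt_mul_sub_windowMoment_one hw hwper _ x
end

section
/- Let w : ℝ → ℝ be continuous and 1-periodic, and define v : [0,1] → ℝ by v(x) = (x²/2 − x/2 + 13/12)·∫₀¹ w(y) dy + (x − 1/2)·∫₀¹∫₀ʸ w(s) ds dy − ∫₀ˣ∫₀ʸ w(s) ds dy + ∫₀¹∫₀ʸ∫₀ˢ w(r) dr ds dy. Then ∫₀¹ v(y) dy = ∫₀¹ w(y) dy, and for every x ∈ (0,1), v is twice differentiable at x with v″(x) = ∫₀¹ v(y) dy − w(x); that is, v solves (μ − ∂_x²) v = w, where μ(f) = ∫₀¹ f(y) dy. -/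
open MeasureTheory Real Set Filter

/-!
Let `W` be the primitive of `w` from `0` and `W₂` the primitive of `W`. Then
`v x = p x * ∫₀¹ w + (x - 1/2) * ∫₀¹ W - W₂ x + ∫₀¹ W₂` with `p x = x²/2 - x/2 + 13/12`, so
`p'' = 1` and the fundamental theorem of calculus give `v'' = ∫₀¹ w - w`. The constants are tuned
so that `∫₀¹ p = 1` and `∫₀¹ (x - 1/2) = 0`, while the constant `∫₀¹ W₂` cancels the mean of `W₂`;
hence `∫₀¹ v = ∫₀¹ w`.
-/

lemma Continuous.hasDerivAt_integral {f : ℝ → ℝ} (hf : Continuous f) (a x : ℝ) :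
    HasDerivAt (fun u => ∫ t in a..u, f t) (f x) x :=
  (hf.integral_hasStrictDerivAt a x).hasDerivAt

lemma Continuous.continuous_integral {f : ℝ → ℝ} (hf : Continuous f) (a : ℝ) :
    Continuous fun u => ∫ t in a..u, f t :=
  intervalIntegral.continuous_primitive (fun _ _ => hf.intervalIntegrable _ _) a

lemma integral_quadratic_eq_one : ∫ x in (0:ℝ)..1, (x ^ 2 / 2 - x / 2 + 13 / 12) = 1 := by
  have hi : ∀ f : ℝ → ℝ, Continuous f → IntervalIntegrable f volume 0 1 :=
    fun f hf => hf.intervalIntegrable 0 1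
  rw [intervalIntegral.integral_add (hi _ (by fun_prop)) intervalIntegrable_const,
    intervalIntegral.integral_sub (hi _ (by fun_prop)) (hi _ (by fun_prop)),
    intervalIntegral.integral_div, intervalIntegral.integral_div, integral_pow, integral_id]
  norm_num

lemma integral_sub_half_eq_zero : ∫ x in (0:ℝ)..1, (x - 1 / 2) = 0 := by
  norm_num

lemma hasDerivAt_quadratic_mul_add_linear_mul (A B x : ℝ) :
    HasDerivAt (fun x => (x ^ 2 / 2 - x / 2 + 13 / 12) * A + (x - 1 / 2) * B)
      ((x - 1 / 2) * A + B) x := by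
  have hp := (((hasDerivAt_pow 2 x).div_const 2).sub ((hasDerivAt_id' x).div_const 2)).add_const
    (13 / 12 : ℝ)
  have hq := (hasDerivAt_id' x).sub_const (1 / 2 : ℝ)
  exact ((hp.mul_const A).add (hq.mul_const B)).congr_deriv (by norm_num)

lemma integral_quadratic_mul_add_linear_mul_sub_add (A B C : ℝ) {g : ℝ → ℝ} (hg : Continuous g) :
    ∫ x in (0:ℝ)..1, ((x ^ 2 / 2 - x / 2 + 13 / 12) * A + (x - 1 / 2) * B - g x + C)
      = A - (∫ x in (0:ℝ)..1, g x) + C := by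
  have hp : IntervalIntegrable (fun x : ℝ => (x ^ 2 / 2 - x / 2 + 13 / 12) * A) volume 0 1 :=
    (by fun_prop : Continuous _).intervalIntegrable _ _
  have hq : IntervalIntegrable (fun x : ℝ => (x - 1 / 2) * B) volume 0 1 :=
    (by fun_prop : Continuous _).intervalIntegrable _ _
  rw [intervalIntegral.integral_add ((hp.add hq).sub (hg.intervalIntegrable _ _))
      intervalIntegrable_const,
    intervalIntegral.integral_sub (hp.add hq) (hg.intervalIntegrable _ _),
    intervalIntegral.integral_add hp hq, intervalIntegral.integral_mul_const,
    intervalIntegral.integral_mul_const, integral_quadratic_eq_one, integral_sub_half_eq_zero]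
  simp

theorem stmt_7_general (w v : ℝ → ℝ)
    (hw : Continuous w)
    (hv : ∀ x : ℝ, v x =
      (x ^ 2 / 2 - x / 2 + 13 / 12) * (∫ y in (0:ℝ)..1, w y)
      + (x - 1 / 2) * (∫ y in (0:ℝ)..1, ∫ s in (0:ℝ)..y, w s)
      - (∫ y in (0:ℝ)..x, ∫ s in (0:ℝ)..y, w s)
      + ∫ y in (0:ℝ)..1, ∫ s in (0:ℝ)..y, ∫ r in (0:ℝ)..s, w r) :
    (∫ y in (0:ℝ)..1, v y) = (∫ y in (0:ℝ)..1, w y) ∧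
    ∃ v' : ℝ → ℝ, (∀ x ∈ Set.Ioo (0:ℝ) 1, HasDerivAt v (v' x) x) ∧
      ∀ x ∈ Set.Ioo (0:ℝ) 1, HasDerivAt v' ((∫ y in (0:ℝ)..1, v y) - w x) x := by
  set W : ℝ → ℝ := fun x => ∫ s in (0:ℝ)..x, w s
  set W₂ : ℝ → ℝ := fun x => ∫ y in (0:ℝ)..x, W y
  have hW : Continuous W := hw.continuous_integral 0
  have hv' : v = fun x => (x ^ 2 / 2 - x / 2 + 13 / 12) * (∫ y in (0:ℝ)..1, w y)
      + (x - 1 / 2) * (∫ y in (0:ℝ)..1, W y) - W₂ x + ∫ y in (0:ℝ)..1, W₂ y := funext hv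
  have hmean : ∫ y in (0:ℝ)..1, v y = ∫ y in (0:ℝ)..1, w y := by
    rw [hv', integral_quadratic_mul_add_linear_mul_sub_add _ _ _ (hW.continuous_integral 0)]
    ring
  refine ⟨hmean, fun x => (x - 1 / 2) * (∫ y in (0:ℝ)..1, w y) + (∫ y in (0:ℝ)..1, W y) - W x,
    fun x _ => ?_, fun x _ => ?_⟩
  · rw [hv']
    exact ((hasDerivAt_quadratic_mul_add_linear_mul _ _ x).sub
      (hW.hasDerivAt_integral 0 x)).add_const _
  · rw [hmean]
    exact (((((hasDerivAt_id' x).sub_const (1 / 2 : ℝ)).mul_const _).add_const _).sub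
      (hw.hasDerivAt_integral 0 x)).congr_deriv (by ring)

theorem stmt_7 (w v : ℝ → ℝ)
    (hw : Continuous w)
    (hwper : ∀ x : ℝ, w (x + 1) = w x)
    (hv : ∀ x : ℝ, v x =
      (x ^ 2 / 2 - x / 2 + 13 / 12) * (∫ y in (0:ℝ)..1, w y)
      + (x - 1 / 2) * (∫ y in (0:ℝ)..1, ∫ s in (0:ℝ)..y, w s)
      - (∫ y in (0:ℝ)..x, ∫ s in (0:ℝ)..y, w s)
      + ∫ y in (0:ℝ)..1, ∫ s in (0:ℝ)..y, ∫ r in (0:ℝ)..s, w r) :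
    (∫ y in (0:ℝ)..1, v y) = (∫ y in (0:ℝ)..1, w y) ∧
    ∃ v' : ℝ → ℝ, (∀ x ∈ Set.Ioo (0:ℝ) 1, HasDerivAt v (v' x) x) ∧
      ∀ x ∈ Set.Ioo (0:ℝ) 1, HasDerivAt v' ((∫ y in (0:ℝ)..1, v y) - w x) x :=
  stmt_7_general w v hw hv
end

section
/- Let g : ℝ → ℝ be the 1-periodic function with g(x) = (1/2)x(x−1) + 13/12 for x ∈ [0,1), and let w : ℝ → ℝ be continuous and 1-periodic. Then for every x ∈ [0,1), ∫₀¹ g(x−y) w(y) dy = (x²/2 − x/2 + 13/12)·∫₀¹ w(y) dy + (x − 1/2)·∫₀¹∫₀ʸ w(s) ds dy − ∫₀ˣ∫₀ʸ w(s) ds dy + ∫₀¹∫₀ʸ∫₀ˢ w(r) dr ds dy. Equivalently, for x, x′ ∈ [0,1), g(x−x′) = (x−x′)²/2 − |x−x′|/2 + 13/12. -/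
/-!
On `[-1, 1]` the periodic function `g` is `t ^ 2 / 2 - |t| / 2 + 13 / 12`, so for `y ∈ [0, 1]`
the kernel `g (x - y)` equals `p (x + (1 - y)) - max (x - y) 0`, where
`p t = t ^ 2 / 2 - t / 2 + 13 / 12` is the polynomial giving `g` on `[0, 1)`. Expanding
`p (x + (1 - y))` in powers of `1 - y` and integrating against `w`, Cauchy's formula for repeated
integration turns `∫ (b - y) ^ n / n! * w y` into the `(n + 1)`-fold iterated primitive of `w`.
-/

open MeasureTheory Real Set Filter

open Nat in
theorem integral_sub_pow_mul_eq_iterate_primitive {f : ℝ → ℝ} (hf : Continuous f) (a b : ℝ)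
    (n : ℕ) :
    ∫ y in a..b, (b - y) ^ n / n ! * f y = (fun f y => ∫ s in a..y, f s)^[n + 1] f b := by
  induction n generalizing f with
  | zero => simp
  | succ n ih =>
    set F : ℝ → ℝ := fun y => ∫ s in a..y, f s
    have hF : ∀ y, HasDerivAt F (f y) y := fun y => (hf.integral_hasStrictDerivAt a y).hasDerivAt
    have hFc : Continuous F := continuous_iff_continuousAt.2 fun y => (hF y).continuousAt
    have hu : ∀ y, HasDerivAt (fun y => (b - y) ^ (n + 1) / (n + 1)!)
        (-((b - y) ^ n / n !)) y := by
      intro y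
      refine ((((hasDerivAt_id y).const_sub b).pow (n + 1)).div_const
        ((n + 1)! : ℝ)).congr_deriv ?_
      rw [Nat.factorial_succ]
      push_cast
      field_simp
      simp
    rw [Function.iterate_succ_apply, ← ih hFc,
      intervalIntegral.integral_mul_deriv_eq_deriv_mul (fun y _ => hu y) (fun y _ => hF y)
        ((by fun_prop : Continuous fun y => -((b - y) ^ n / n !)).intervalIntegrable _ _)
        (hf.intervalIntegrable _ _)]
    simp [F]

theorem integral_max_sub_zero_mul {f : ℝ → ℝ} (hf : Continuous f) {a b x : ℝ}
    (hax : a ≤ x) (hxb : x ≤ b) :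
    ∫ y in a..b, max (x - y) 0 * f y = ∫ y in a..x, (x - y) * f y := by
  have hcont : Continuous fun y => max (x - y) 0 * f y := by fun_prop
  rw [← intervalIntegral.integral_add_adjacent_intervals (hcont.intervalIntegrable a x)
    (hcont.intervalIntegrable x b)]
  have hleft : EqOn (fun y => max (x - y) 0 * f y) (fun y => (x - y) * f y) (uIcc a x) := by
    intro y hy
    rw [uIcc_of_le hax] at hy
    simp only [max_eq_left (sub_nonneg.2 hy.2)]
  have hright : EqOn (fun y => max (x - y) 0 * f y) (fun _ => 0) (uIcc x b) := by
    intro y hy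
    rw [uIcc_of_le hxb] at hy
    simp [max_eq_right (sub_nonpos.2 hy.1)]
  rw [intervalIntegral.integral_congr hleft, intervalIntegral.integral_congr hright,
    intervalIntegral.integral_zero, add_zero]

theorem periodic_extension_eq_of_mem_Icc {g : ℝ → ℝ} (hgper : ∀ x : ℝ, g (x + 1) = g x)
    (hgval : ∀ x ∈ Ico (0:ℝ) 1, g x = 1 / 2 * x * (x - 1) + 13 / 12) {t : ℝ}
    (ht : t ∈ Icc (-1:ℝ) 1) :
    g t = t ^ 2 / 2 - |t| / 2 + 13 / 12 := by
  obtain ⟨ht₁, ht₂⟩ := ht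
  rcases lt_or_ge t 0 with hneg | hnonneg
  · rw [← hgper, hgval _ ⟨by linarith, by linarith⟩, abs_of_neg hneg]
    ring
  rcases ht₂.lt_or_eq with hlt | rfl
  · rw [hgval t ⟨hnonneg, hlt⟩, abs_of_nonneg hnonneg]
    ring
  · rw [show (1:ℝ) = 0 + 1 by norm_num, hgper, hgval 0 ⟨le_rfl, one_pos⟩]
    norm_num

theorem stmt_8_general (g w : ℝ → ℝ)
    (hgper : ∀ x : ℝ, g (x + 1) = g x)
    (hgval : ∀ x ∈ Set.Ico (0:ℝ) 1, g x = 1 / 2 * x * (x - 1) + 13 / 12)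
    (hw : Continuous w) :
    (∀ x ∈ Set.Ico (0:ℝ) 1,
      (∫ y in (0:ℝ)..1, g (x - y) * w y)
      = (x ^ 2 / 2 - x / 2 + 13 / 12) * (∫ y in (0:ℝ)..1, w y)
        + (x - 1 / 2) * (∫ y in (0:ℝ)..1, ∫ s in (0:ℝ)..y, w s)
        - (∫ y in (0:ℝ)..x, ∫ s in (0:ℝ)..y, w s)
        + ∫ y in (0:ℝ)..1, ∫ s in (0:ℝ)..y, ∫ r in (0:ℝ)..s, w r) ∧
    (∀ x ∈ Set.Ico (0:ℝ) 1, ∀ x' ∈ Set.Ico (0:ℝ) 1,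
      g (x - x') = (x - x') ^ 2 / 2 - |x - x'| / 2 + 13 / 12) := by
  refine ⟨fun x ⟨hx₀, hx₁⟩ => ?_, fun x hx x' hx' =>
    periodic_extension_eq_of_mem_Icc hgper hgval
      ⟨by linarith [hx.1, hx'.2], by linarith [hx.2, hx'.1]⟩⟩
  have hkernel : EqOn (fun y => g (x - y) * w y)
      (fun y => (x ^ 2 / 2 - x / 2 + 13 / 12) * w y + (x - 1 / 2) * ((1 - y) * w y)
        + (1 - y) ^ 2 / 2 * w y - max (x - y) 0 * w y) (uIcc 0 1) := by
    intro y hy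
    rw [uIcc_of_le zero_le_one] at hy
    dsimp only
    rw [periodic_extension_eq_of_mem_Icc hgper hgval ⟨by linarith [hy.2], by linarith [hy.1]⟩]
    rcases le_total 0 (x - y) with h | h
    · rw [abs_of_nonneg h, max_eq_left h]; ring
    · rw [abs_of_nonpos h, max_eq_right h]; ring
  have hG : ∫ y in (0:ℝ)..1, (1 - y) * w y = ∫ y in (0:ℝ)..1, ∫ s in (0:ℝ)..y, w s := by
    simpa using integral_sub_pow_mul_eq_iterate_primitive hw 0 1 1
  have hH : ∫ y in (0:ℝ)..1, (1 - y) ^ 2 / 2 * w y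
      = ∫ y in (0:ℝ)..1, ∫ s in (0:ℝ)..y, ∫ r in (0:ℝ)..s, w r := by
    simpa using integral_sub_pow_mul_eq_iterate_primitive hw 0 1 2
  have hGx : ∫ y in (0:ℝ)..x, (x - y) * w y
      = ∫ y in (0:ℝ)..x, ∫ s in (0:ℝ)..y, w s := by
    simpa using integral_sub_pow_mul_eq_iterate_primitive hw 0 x 1
  rw [intervalIntegral.integral_congr hkernel, intervalIntegral.integral_sub,
    intervalIntegral.integral_add, intervalIntegral.integral_add,
    intervalIntegral.integral_const_mul, intervalIntegral.integral_const_mul,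
    integral_max_sub_zero_mul hw hx₀ hx₁.le, hG, hH, hGx]
  · ring
  all_goals apply Continuous.intervalIntegrable; fun_prop

theorem stmt_8 (g w : ℝ → ℝ)
    (hgper : ∀ x : ℝ, g (x + 1) = g x)
    (hgval : ∀ x ∈ Set.Ico (0:ℝ) 1, g x = 1 / 2 * x * (x - 1) + 13 / 12)
    (hw : Continuous w)
    (hwper : ∀ x : ℝ, w (x + 1) = w x) :
    (∀ x ∈ Set.Ico (0:ℝ) 1,
      (∫ y in (0:ℝ)..1, g (x - y) * w y)
      = (x ^ 2 / 2 - x / 2 + 13 / 12) * (∫ y in (0:ℝ)..1, w y)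
        + (x - 1 / 2) * (∫ y in (0:ℝ)..1, ∫ s in (0:ℝ)..y, w s)
        - (∫ y in (0:ℝ)..x, ∫ s in (0:ℝ)..y, w s)
        + ∫ y in (0:ℝ)..1, ∫ s in (0:ℝ)..y, ∫ r in (0:ℝ)..s, w r) ∧
    (∀ x ∈ Set.Ico (0:ℝ) 1, ∀ x' ∈ Set.Ico (0:ℝ) 1,
      g (x - x') = (x - x') ^ 2 / 2 - |x - x'| / 2 + 13 / 12) :=
  stmt_8_general g w hgper hgval hw
end

section
/- Let (u, ρ) be a smooth solution of the periodic two-component μ-Hunter-Saxton system on [0,∞). Then for all t ≥ 0 and x ∈ ℝ, u_{tx}(t,x) − (u(t,x)+γ) u_{xx}(t,x) = (1/2) u_x(t,x)² − 2μ₀ u(t,x) − (1/2) ρ(t,x)² + 2μ₀² + (1/2) μ₁². -/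
open MeasureTheory Real Set Filter

open Function
open scoped ContDiff

/-! With `μ(t) = ∫₀¹ u(t,·)` and the flux `Φ = u_tx - (u + γ) u_xx - u_x² / 2 + 2 μ u + ρ² / 2`,
the momentum equation says exactly `μ' = ∂ₓ Φ`. Integrating over a period gives `μ' = 0`, so
`μ ≡ μ₀` and `Φ(t, ·)` is constant in `x`. Eliminating `u_tx` through `Φ(t, ·) = const` and using
the equation for `ρ`, `∂ₜ (u_x² + ρ²)` becomes the `x`-derivative of a periodic function, so the
energy `∫₀¹ (u_x² + ρ²)` keeps its initial value `μ₁²`. Finally the constant `Φ(t, ·)` equals its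
mean, and since `∫₀¹ (u_tx - (u + γ) u_xx) = ∫₀¹ u_x²` by parts, that mean is `E / 2 + 2 μ²`. -/

theorem Function.Periodic.deriv {𝕜 F : Type*} [NontriviallyNormedField 𝕜] [NormedAddCommGroup F]
    [NormedSpace 𝕜 F] {g : 𝕜 → F} {c : 𝕜} (hg : Periodic g c) : Periodic (deriv g) c := fun x => by
  rw [← deriv_comp_add_const, funext hg]

theorem Function.Periodic.intervalIntegral_eq_zero_of_hasDerivAt_s10 {E : Type*} [NormedAddCommGroup E]
    [NormedSpace ℝ E] [CompleteSpace E] {g g' : ℝ → E} {T : ℝ} (hg : Periodic g T)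
    (hderiv : ∀ x, HasDerivAt g (g' x) x) (hg' : Continuous g') :
    ∫ x in (0 : ℝ)..T, g' x = 0 := by
  rw [intervalIntegral.integral_eq_sub_of_hasDerivAt (fun x _ => hderiv x)
    (hg'.intervalIntegrable _ _), sub_eq_zero]
  simpa using hg 0

theorem eq_of_hasDerivAt_zero_of_le {g : ℝ → ℝ} {a : ℝ} (hg : ∀ t, a ≤ t → HasDerivAt g 0 t)
    {t : ℝ} (ht : a ≤ t) : g t = g a :=
  constant_of_has_deriv_right_zero
    (fun s hs => (hg s hs.1).continuousAt.continuousWithinAt)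
    (fun s hs => (hg s hs.1).hasDerivWithinAt) t ⟨ht, le_rfl⟩

theorem DifferentiableAt.hasDerivAt_comp_prodMk_const {E : Type*} [NormedAddCommGroup E]
    [NormedSpace ℝ E] {G : ℝ × ℝ → E} {t x : ℝ} (hG : DifferentiableAt ℝ G (t, x)) :
    HasDerivAt (fun s => G (s, x)) (fderiv ℝ G (t, x) (1, 0)) t :=
  hG.hasFDerivAt.comp_hasDerivAt t ((hasDerivAt_id t).prodMk (hasDerivAt_const t x))

theorem DifferentiableAt.hasDerivAt_comp_const_prodMk {E : Type*} [NormedAddCommGroup E]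
    [NormedSpace ℝ E] {G : ℝ × ℝ → E} {t x : ℝ} (hG : DifferentiableAt ℝ G (t, x)) :
    HasDerivAt (fun y => G (t, y)) (fderiv ℝ G (t, x) (0, 1)) x :=
  hG.hasFDerivAt.comp_hasDerivAt x ((hasDerivAt_const x t).prodMk (hasDerivAt_id x))

namespace MuHunterSaxton

noncomputable section

def dx (f : ℝ → ℝ → ℝ) : ℝ → ℝ → ℝ := fun t => deriv (f t)

def dt (f : ℝ → ℝ → ℝ) : ℝ → ℝ → ℝ := fun t x => deriv (fun s => f s x) t

def mean (f : ℝ → ℝ → ℝ) (t : ℝ) : ℝ := ∫ y in (0 : ℝ)..1, f t y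

end

section Calculus

variable {f : ℝ → ℝ → ℝ}

theorem contDiff_uncurry_dx {m n : WithTop ℕ∞} (hf : ContDiff ℝ n (uncurry f)) (hmn : m + 1 ≤ n) :
    ContDiff ℝ m (uncurry (dx f)) :=
  have hf' : ContDiff ℝ n (uncurry fun (p : ℝ × ℝ) y => f p.1 y) :=
    hf.comp ((contDiff_fst.comp contDiff_fst).prodMk contDiff_snd)
  hf'.fderiv_apply contDiff_snd contDiff_const hmn

theorem contDiff_uncurry_dt {m n : WithTop ℕ∞} (hf : ContDiff ℝ n (uncurry f)) (hmn : m + 1 ≤ n) :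
    ContDiff ℝ m (uncurry (dt f)) :=
  have hf' : ContDiff ℝ n (uncurry fun (p : ℝ × ℝ) s => f s p.2) :=
    hf.comp (contDiff_snd.prodMk (contDiff_snd.comp contDiff_fst))
  hf'.fderiv_apply contDiff_fst contDiff_const hmn

theorem hasDerivAt_dx (hf : Differentiable ℝ (uncurry f)) (t x : ℝ) :
    HasDerivAt (f t) (dx f t x) x :=
  (hf.comp ((differentiable_const t).prodMk differentiable_id) x).hasDerivAt

theorem hasDerivAt_dt (hf : Differentiable ℝ (uncurry f)) (t x : ℝ) :
    HasDerivAt (fun s => f s x) (dt f t x) t :=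
  (hf.comp (differentiable_id.prodMk (differentiable_const x)) t).hasDerivAt

theorem dt_dx_comm (hf : ContDiff ℝ 2 (uncurry f)) : dt (dx f) = dx (dt f) := by
  set F := uncurry f
  have hF : Differentiable ℝ F := hf.differentiable (by simp)
  have hF' : Differentiable ℝ (fderiv ℝ F) :=
    (hf.fderiv_right (m := 1) (by norm_num)).differentiable (by simp)
  have hdx : dx f = fun s y => fderiv ℝ F (s, y) (0, 1) :=
    funext₂ fun s y => (hF (s, y)).hasDerivAt_comp_const_prodMk.deriv
  have hdt : dt f = fun s y => fderiv ℝ F (s, y) (1, 0) :=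
    funext₂ fun s y => (hF (s, y)).hasDerivAt_comp_prodMk_const.deriv
  ext t x
  have hsymm := (hf.contDiffAt (x := (t, x))).isSymmSndFDerivAt (by simp)
  rw [hdx, hdt]
  calc deriv (fun s => fderiv ℝ F (s, x) (0, 1)) t
      = fderiv ℝ (fderiv ℝ F) (t, x) (1, 0) (0, 1) :=
        ((ContinuousLinearMap.apply ℝ ℝ ((0 : ℝ), (1 : ℝ))).hasFDerivAt.comp_hasDerivAt t
          (hF' (t, x)).hasDerivAt_comp_prodMk_const).deriv
    _ = fderiv ℝ (fderiv ℝ F) (t, x) (0, 1) (1, 0) := hsymm _ _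
    _ = deriv (fun y => fderiv ℝ F (t, y) (1, 0)) x :=
        ((ContinuousLinearMap.apply ℝ ℝ ((1 : ℝ), (0 : ℝ))).hasFDerivAt.comp_hasDerivAt x
          (hF' (t, x)).hasDerivAt_comp_const_prodMk).deriv.symm

theorem periodic_dx {c : ℝ} (hf : ∀ t, Periodic (f t) c) (t : ℝ) : Periodic (dx f t) c :=
  (hf t).deriv

theorem periodic_dt {c : ℝ} (hf : ∀ t, Periodic (f t) c) (t : ℝ) : Periodic (dt f t) c :=
  fun x => congrArg (deriv · t) (funext fun s => hf s x)

theorem continuous_slice (hf : Continuous (uncurry f)) (t : ℝ) : Continuous (f t) :=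
  hf.comp (continuous_const.prodMk continuous_id)

theorem contDiff_slice {n : WithTop ℕ∞} (hf : ContDiff ℝ n (uncurry f)) (t : ℝ) :
    ContDiff ℝ n (f t) :=
  hf.comp (contDiff_const.prodMk contDiff_id)

theorem hasDerivAt_mean (hf : ContDiff ℝ 1 (uncurry f)) (t : ℝ) :
    HasDerivAt (mean f) (mean (dt f) t) t := by
  have hf_cont : Continuous (uncurry f) := hf.continuous
  have hdt_cont : Continuous (uncurry (dt f)) :=
    (contDiff_uncurry_dt (m := 0) hf (by norm_num)).continuous
  obtain ⟨C, hC⟩ := ((isCompact_closedBall t 1).prod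
    (isCompact_uIcc (a := (0 : ℝ)) (b := 1))).exists_bound_of_continuousOn hdt_cont.continuousOn
  refine (intervalIntegral.hasDerivAt_integral_of_dominated_loc_of_deriv_le
    (bound := fun _ => C) (Metric.ball_mem_nhds t one_pos)
    (.of_forall fun s => (continuous_slice hf_cont s).aestronglyMeasurable)
    ((continuous_slice hf_cont t).intervalIntegrable 0 1)
    (continuous_slice hdt_cont t).aestronglyMeasurable
    (ae_of_all _ fun y hy s hs => hC (s, y) ⟨Metric.ball_subset_closedBall hs, uIoc_subset_uIcc hy⟩)
    intervalIntegrable_const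
    (ae_of_all _ fun y _ s _ => hasDerivAt_dt (hf.differentiable one_ne_zero) s y)).2

end Calculus

noncomputable section

def energy (u ρ : ℝ → ℝ → ℝ) : ℝ → ℝ := mean (dx u ^ 2 + ρ ^ 2)

def flux (γ : ℝ) (u ρ : ℝ → ℝ → ℝ) (t x : ℝ) : ℝ :=
  dt (dx u) t x - (u t x + γ) * dx (dx u) t x - dx u t x ^ 2 / 2 + 2 * mean u t * u t x
    + ρ t x ^ 2 / 2

end

structure IsSolution (γ : ℝ) (u ρ : ℝ → ℝ → ℝ) : Prop where
  contDiff_u : ContDiff ℝ ∞ (uncurry u)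
  contDiff_ρ : ContDiff ℝ ∞ (uncurry ρ)
  periodic_u : ∀ t, Periodic (u t) 1
  periodic_ρ : ∀ t, Periodic (ρ t) 1
  momentum : ∀ t x, 0 ≤ t →
    deriv (mean u) t - dt (dx (dx u)) t x
      = 2 * mean u t * dx u t x - 2 * dx u t x * dx (dx u) t x - u t x * dx (dx (dx u)) t x
        + ρ t x * dx ρ t x - γ * dx (dx (dx u)) t x
  mass : ∀ t x, 0 ≤ t → dt ρ t x = dx (ρ * u) t x + γ * dx ρ t x

section Flux

variable {u ρ : ℝ → ℝ → ℝ}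

theorem periodic_flux {c : ℝ} (hu : ∀ t, Periodic (u t) c) (hρ : ∀ t, Periodic (ρ t) c)
    (γ t : ℝ) : Periodic (flux γ u ρ t) c := fun x => by
  simp only [flux, periodic_dt (periodic_dx hu) t x, hu t x, periodic_dx hu t x,
    periodic_dx (periodic_dx hu) t x, hρ t x]

theorem integral_flux (hu : ContDiff ℝ 2 (uncurry u)) (hρ : Continuous (uncurry ρ))
    (hper : ∀ t, Periodic (u t) 1) (γ t : ℝ) :
    ∫ x in (0 : ℝ)..1, flux γ u ρ t x = energy u ρ t / 2 + 2 * mean u t ^ 2 := by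
  have hux := contDiff_uncurry_dx (m := 1) hu (by norm_num)
  have huxx := contDiff_uncurry_dx (m := 0) hux (by norm_num)
  have hut := contDiff_uncurry_dt (m := 1) hu (by norm_num)
  have hutx := contDiff_uncurry_dx (m := 0) hut (by norm_num)
  have : Continuous (u t) := (contDiff_slice hu t).continuous
  have : Continuous (dx u t) := (contDiff_slice hux t).continuous
  have : Continuous (dx (dx u) t) := (contDiff_slice huxx t).continuous
  have : Continuous (dx (dt u) t) := (contDiff_slice hutx t).continuous
  have : Continuous (ρ t) := continuous_slice hρ t
  have hint : ∀ g : ℝ → ℝ, Continuous g → IntervalIntegrable g volume 0 1 :=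
    fun g hg => hg.intervalIntegrable 0 1
  have hprim : ∀ x, HasDerivAt (fun y => dt u t y - (u t y + γ) * dx u t y)
      (dx (dt u) t x - dx u t x ^ 2 - (u t x + γ) * dx (dx u) t x) x := fun x => by
    refine ((hasDerivAt_dx (hut.differentiable one_ne_zero) t x).sub
      (((hasDerivAt_dx (hu.differentiable two_ne_zero) t x).add_const γ).mul
        (hasDerivAt_dx (hux.differentiable one_ne_zero) t x))).congr_deriv ?_
    ring
  have hprim_int : ∫ x in (0 : ℝ)..1,
      (dx (dt u) t x - dx u t x ^ 2 - (u t x + γ) * dx (dx u) t x) = 0 :=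
    Periodic.intervalIntegral_eq_zero_of_hasDerivAt_s10
      (fun x => by rw [periodic_dt hper t x, hper t x, periodic_dx hper t x]) hprim
      (by fun_prop)
  have hsplit : flux γ u ρ t = fun x =>
      (dx (dt u) t x - dx u t x ^ 2 - (u t x + γ) * dx (dx u) t x)
        + ((dx u t x ^ 2 + ρ t x ^ 2) / 2 + 2 * mean u t * u t x) := by
    ext x
    rw [flux, dt_dx_comm hu]
    ring
  rw [hsplit, intervalIntegral.integral_add (hint _ (by fun_prop)) (hint _ (by fun_prop)),
    hprim_int, intervalIntegral.integral_add (hint _ (by fun_prop)) (hint _ (by fun_prop)),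
    intervalIntegral.integral_div, intervalIntegral.integral_const_mul]
  simp only [energy, mean, Pi.add_apply, Pi.pow_apply]
  ring

end Flux

namespace IsSolution

variable {γ : ℝ} {u ρ : ℝ → ℝ → ℝ} {t : ℝ}

theorem hasDerivAt_flux (h : IsSolution γ u ρ) (ht : 0 ≤ t) (x : ℝ) :
    HasDerivAt (flux γ u ρ t) (deriv (mean u) t) x := by
  have hu := h.contDiff_u
  have hux := contDiff_uncurry_dx hu ENat.coe_top_add_one.le
  have huxx := contDiff_uncurry_dx hux ENat.coe_top_add_one.le
  have huxt := contDiff_uncurry_dt hux ENat.coe_top_add_one.le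
  have hD : ∀ {f : ℝ → ℝ → ℝ}, ContDiff ℝ ∞ (uncurry f) → HasDerivAt (f t) (dx f t x) x :=
    fun hf => hasDerivAt_dx (hf.differentiable (by simp)) t x
  refine (((((hD huxt).sub (((hD hu).add_const γ).mul (hD huxx))).sub
    (((hD hux).pow 2).div_const 2)).add ((hD hu).const_mul (2 * mean u t))).add
    (((hD h.contDiff_ρ).pow 2).div_const 2)).congr_deriv ?_
  rw [← dt_dx_comm (hux.of_le ENat.LEInfty.out)]
  push_cast
  linear_combination -h.momentum t x ht

theorem deriv_mean_eq_zero (h : IsSolution γ u ρ) (ht : 0 ≤ t) : deriv (mean u) t = 0 := by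
  simpa using (periodic_flux h.periodic_u h.periodic_ρ γ t).intervalIntegral_eq_zero_of_hasDerivAt_s10
    (h.hasDerivAt_flux ht) continuous_const

theorem mean_eq_mean_zero (h : IsSolution γ u ρ) (ht : 0 ≤ t) : mean u t = mean u 0 :=
  eq_of_hasDerivAt_zero_of_le (fun s hs => h.deriv_mean_eq_zero hs ▸
    (hasDerivAt_mean (h.contDiff_u.of_le ENat.LEInfty.out) s).differentiableAt.hasDerivAt) ht

theorem flux_eq_flux_zero (h : IsSolution γ u ρ) (ht : 0 ≤ t) (x : ℝ) :
    flux γ u ρ t x = flux γ u ρ t 0 :=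
  is_const_of_deriv_eq_zero (fun y => (h.hasDerivAt_flux ht y).differentiableAt)
    (fun y => (h.hasDerivAt_flux ht y).deriv.trans (h.deriv_mean_eq_zero ht)) x 0

theorem hasDerivAt_energy (h : IsSolution γ u ρ) (ht : 0 ≤ t) : HasDerivAt (energy u ρ) 0 t := by
  have hu := h.contDiff_u
  have hρ := h.contDiff_ρ
  have hux := contDiff_uncurry_dx hu ENat.coe_top_add_one.le
  have hdens : ContDiff ℝ ∞ (uncurry (dx u ^ 2 + ρ ^ 2)) := (hux.pow 2).add (hρ.pow 2)
  have hD : ∀ {f : ℝ → ℝ → ℝ}, ContDiff ℝ ∞ (uncurry f) → ∀ x, HasDerivAt (f t) (dx f t x) x :=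
    fun hf => hasDerivAt_dx (hf.differentiable (by simp)) t
  have hT : ∀ {f : ℝ → ℝ → ℝ}, ContDiff ℝ ∞ (uncurry f) → ∀ x,
      HasDerivAt (fun s => f s x) (dt f t x) t :=
    fun hf => hasDerivAt_dt (hf.differentiable (by simp)) t
  set c := flux γ u ρ t 0
  -- `u_tx` is eliminated through `flux γ u ρ t x = c`, and `ρ_t` through the mass equation
  have hG : ∀ x, HasDerivAt
      (fun y => (u t y + γ) * (dx u t y ^ 2 + ρ t y ^ 2) - 2 * mean u t * u t y ^ 2 + 2 * c * u t y)
      (dt (dx u ^ 2 + ρ ^ 2) t x) x := by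
    intro x
    have hdens_t : dt (dx u ^ 2 + ρ ^ 2) t x
        = 2 * dx u t x * dt (dx u) t x + 2 * ρ t x * dt ρ t x :=
      (((hT hux x).pow 2).add ((hT hρ x).pow 2)).deriv.trans (by push_cast; ring)
    have hprod : dx (ρ * u) t x = dx ρ t x * u t x + ρ t x * dx u t x :=
      ((hD hρ x).mul (hD hu x)).deriv
    have hflux := h.flux_eq_flux_zero ht x
    rw [flux] at hflux
    refine ((((hD hu x).add_const γ).mul (((hD hux x).pow 2).add ((hD hρ x).pow 2))).sub
      (((hD hu x).pow 2).const_mul (2 * mean u t)) |>.add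
      ((hD hu x).const_mul (2 * c))).congr_deriv ?_
    simp only [Pi.add_apply, Pi.pow_apply]
    push_cast
    linear_combination (-2 * dx u t x) * hflux - 2 * ρ t x * h.mass t x ht - 2 * ρ t x * hprod
      - hdens_t
  have hG_per : Periodic
      (fun y => (u t y + γ) * (dx u t y ^ 2 + ρ t y ^ 2) - 2 * mean u t * u t y ^ 2 + 2 * c * u t y)
      1 := fun x => by
    simp only [h.periodic_u t x, periodic_dx h.periodic_u t x, h.periodic_ρ t x]
  have hzero := hG_per.intervalIntegral_eq_zero_of_hasDerivAt_s10 hG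
    (contDiff_slice (contDiff_uncurry_dt hdens ENat.coe_top_add_one.le) t).continuous
  have hE := hasDerivAt_mean (hdens.of_le ENat.LEInfty.out) t
  rwa [mean, hzero] at hE

theorem energy_eq_energy_zero (h : IsSolution γ u ρ) (ht : 0 ≤ t) : energy u ρ t = energy u ρ 0 :=
  eq_of_hasDerivAt_zero_of_le (fun _ hs => h.hasDerivAt_energy hs) ht

theorem flux_eq_initial (h : IsSolution γ u ρ) (ht : 0 ≤ t) (x : ℝ) :
    flux γ u ρ t x = energy u ρ 0 / 2 + 2 * mean u 0 ^ 2 :=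
  calc flux γ u ρ t x = ∫ _ in (0 : ℝ)..1, flux γ u ρ t 0 := by simp [h.flux_eq_flux_zero ht x]
    _ = ∫ y in (0 : ℝ)..1, flux γ u ρ t y :=
      intervalIntegral.integral_congr fun y _ => (h.flux_eq_flux_zero ht y).symm
    _ = energy u ρ t / 2 + 2 * mean u t ^ 2 :=
      integral_flux (h.contDiff_u.of_le ENat.LEInfty.out) h.contDiff_ρ.continuous h.periodic_u γ t
    _ = energy u ρ 0 / 2 + 2 * mean u 0 ^ 2 := by rw [h.energy_eq_energy_zero ht, h.mean_eq_mean_zero ht]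

end IsSolution

end MuHunterSaxton

theorem stmt_10
    (γ : ℝ) (u ρ : ℝ → ℝ → ℝ) (μ₀ μ₁ : ℝ)
    (hu : ContDiff ℝ (⊤ : ℕ∞) (Function.uncurry u))
    (hρ : ContDiff ℝ (⊤ : ℕ∞) (Function.uncurry ρ))
    (huper : ∀ t x : ℝ, u t (x + 1) = u t x)
    (hρper : ∀ t x : ℝ, ρ t (x + 1) = ρ t x)
    (heq1 : ∀ t x : ℝ, 0 ≤ t →
      deriv (fun s => ∫ y in (0:ℝ)..1, u s y) t
        - deriv (fun s => deriv (deriv (u s)) x) t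
      = 2 * (∫ y in (0:ℝ)..1, u t y) * deriv (u t) x
        - 2 * deriv (u t) x * deriv (deriv (u t)) x
        - u t x * deriv (deriv (deriv (u t))) x
        + ρ t x * deriv (ρ t) x
        - γ * deriv (deriv (deriv (u t))) x)
    (heq2 : ∀ t x : ℝ, 0 ≤ t →
      deriv (fun s => ρ s x) t
      = deriv (fun y => ρ t y * u t y) x + γ * deriv (ρ t) x)
    (hμ₀ : μ₀ = ∫ y in (0:ℝ)..1, u 0 y)
    (hμ₁ : μ₁ = Real.sqrt (∫ y in (0:ℝ)..1, ((deriv (u 0) y) ^ 2 + (ρ 0 y) ^ 2)))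
    : ∀ t x : ℝ, 0 ≤ t →
      deriv (fun s => deriv (u s) x) t - (u t x + γ) * deriv (deriv (u t)) x
      = 1 / 2 * (deriv (u t) x) ^ 2 - 2 * μ₀ * u t x - 1 / 2 * (ρ t x) ^ 2
        + 2 * μ₀ ^ 2 + 1 / 2 * μ₁ ^ 2 := by
  have h : MuHunterSaxton.IsSolution γ u ρ := ⟨hu, hρ, huper, hρper, heq1, heq2⟩
  have hE : MuHunterSaxton.energy u ρ 0 = μ₁ ^ 2 := by
    rw [hμ₁, Real.sq_sqrt (intervalIntegral.integral_nonneg zero_le_one fun _ _ => by positivity)]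
    rfl
  intro t x ht
  have hflux := h.flux_eq_initial ht x
  rw [MuHunterSaxton.flux, h.mean_eq_mean_zero ht, hE] at hflux
  simp only [MuHunterSaxton.dx, MuHunterSaxton.dt, MuHunterSaxton.mean, ← hμ₀] at hflux
  linear_combination hflux
end
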